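/- Fix an integer m ≥ 1 and δ ∈ (0, 1/2]. Let D_δ be the product distribution on {0, 1, 2}^m in which each coordinate independently equals 2 with probability δ/m, equals 1 with probability δ, and equals 0 otherwise. Let S_1, …, S_t ⊆ {1, …, m} be sets each of size exactly s ≥ 1, and let M be the menu consisting of the null entry (0, 0), the entries (e_j, 2) for 1 ≤ j ≤ m (each item priced at 2), and the entries (x^{(i)}, 1) for 1 ≤ i ≤ t, where x^{(i)} is the uniform lottery over S_i, i.e., x^{(i)}_j = 1/s if j ∈ S_i and x^{(i)}_j = 0 otherwise. Then for every selection rule σ for M, Rev_{D_δ}(M, σ) ≤ 2δ + t · (8δ)^{s/2}. (This is the over-fitting phenomenon: an auction tailored to lotteries over specific sampled sets extracts only O(δ) revenue from the true distribution when s is large.) -/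

import Mathlib

open MeasureTheory

/-- An entry of a menu: a lottery (vector of allocation probabilities) together with a price. -/
abbrev Entry (m : ℕ) := (Fin m → ℝ) × ℝ

/-- A lottery: nonnegative coordinates summing to at most 1. -/
def IsLottery (m : ℕ) (x : Fin m → ℝ) : Prop := (∀ j, 0 ≤ x j) ∧ ∑ j, x j ≤ 1

/-- A menu: a finite set of entries containing the null entry `(0, 0)`,
all of whose entries are lotteries. -/
def IsMenu (m : ℕ) (M : Finset (Entry m)) : Prop :=
  (0, 0) ∈ M ∧ ∀ e ∈ M, IsLottery m e.1

/-- Utility of entry `e` for a buyer with valuation `v`. -/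
def utility {m : ℕ} (v : Fin m → ℝ) (e : Entry m) : ℝ := (∑ j, v j * e.1 j) - e.2

/-- A selection rule for menu `M`: picks, for each valuation, a utility-maximizing entry of `M`. -/
def IsSelection {m : ℕ} (M : Finset (Entry m)) (s : (Fin m → ℝ) → Entry m) : Prop :=
  ∀ v, s v ∈ M ∧ ∀ e ∈ M, utility v e ≤ utility v (s v)

/-- Revenue of a selection rule `s` under distribution `D`: expected price paid. -/
noncomputable def revSel {m : ℕ} (D : Measure (Fin m → ℝ))
    (s : (Fin m → ℝ) → Entry m) : ℝ :=
  ∫ v, (s v).2 ∂D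

/-- Revenue of menu `M` under distribution `D`: supremum over selection rules. -/
noncomputable def Rev {m : ℕ} (D : Measure (Fin m → ℝ)) (M : Finset (Entry m)) : ℝ :=
  sSup {r | ∃ s, IsSelection M s ∧ r = revSel D s}

/-- Optimal revenue for a distribution `D`: supremum over all menus. -/
noncomputable def OPT {m : ℕ} (D : Measure (Fin m → ℝ)) : ℝ :=
  sSup {r | ∃ M : Finset (Entry m), IsMenu m M ∧ r = Rev D M}

/-- The per-item value distribution of the over-fitting example: value `2` with probability
`δ/m`, value `1` with probability `δ`, and value `0` otherwise. -/
noncomputable def itemDist (m : ℕ) (δ : ℝ) : Measure ℝ :=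
  ENNReal.ofReal (δ / m) • Measure.dirac (2 : ℝ) +
    ENNReal.ofReal δ • Measure.dirac (1 : ℝ) +
    ENNReal.ofReal (1 - δ - δ / m) • Measure.dirac (0 : ℝ)

/-!
A buyer pays `2` only if some item is worth `2` to them, an event of probability at most
`m · δ/m = δ`, and pays `1` for the lottery over `S_i` only if the items of `S_i` are worth at
least `s` in total. Since values lie in `{0, 1, 2}`, the latter forces at least `⌈s/2⌉` items of
`S_i` to be worth `1` or more, so a union bound over the `⌈s/2⌉`-subsets of `S_i` bounds its
probability by `C(s, ⌈s/2⌉) (2δ)^⌈s/2⌉ ≤ 2^s (2δ)^(s/2) = (8δ)^(s/2)`.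
-/

open Finset

theorem sum_le_two_mul_card_filter_one_le {ι : Type*} (S : Finset ι) {v : ι → ℝ}
    (hv : ∀ j ∈ S, v j ∈ ({0, 1, 2} : Set ℝ)) :
    ∑ j ∈ S, v j ≤ 2 * #{j ∈ S | 1 ≤ v j} := by
  calc ∑ j ∈ S, v j ≤ ∑ j ∈ S, if 1 ≤ v j then (2 : ℝ) else 0 := by
        refine Finset.sum_le_sum fun j hj => ?_
        have hj' := hv j hj
        simp only [Set.mem_insert_iff, Set.mem_singleton_iff] at hj'
        rcases hj' with h | h | h <;> norm_num [h]
    _ = 2 * #{j ∈ S | 1 ≤ v j} := by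
        rw [← Finset.sum_filter, Finset.sum_const, nsmul_eq_mul, mul_comm]

theorem choose_mul_pow_le_rpow {s k : ℕ} {q : ℝ} (hq₀ : 0 < q) (hq₁ : q ≤ 1) (hsk : s ≤ 2 * k) :
    s.choose k * q ^ k ≤ (4 * q) ^ ((s : ℝ) / 2) := by
  have hchoose : (s.choose k : ℝ) ≤ 2 ^ s := by exact_mod_cast Nat.choose_le_two_pow s k
  have hpow : q ^ k ≤ q ^ ((s : ℝ) / 2) := by
    rw [← Real.rpow_natCast]
    refine Real.rpow_le_rpow_of_exponent_ge hq₀ hq₁ ?_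
    rw [div_le_iff₀ two_pos]
    exact_mod_cast (by omega : s ≤ k * 2)
  calc s.choose k * q ^ k ≤ 2 ^ s * q ^ ((s : ℝ) / 2) := by gcongr
    _ = (4 * q) ^ ((s : ℝ) / 2) := by
      rw [Real.mul_rpow (by norm_num) hq₀.le, show (4 : ℝ) = 2 ^ (2 : ℝ) by norm_num,
        ← Real.rpow_mul (by norm_num), mul_div_cancel₀ _ two_ne_zero, Real.rpow_natCast]

section IidProduct

variable {ι : Type*} [Fintype ι] {ν : Measure ℝ} [IsProbabilityMeasure ν]

theorem measureReal_pi_exists_mem_le {s : Set ℝ} (hs : MeasurableSet s) :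
    (Measure.pi fun _ : ι => ν).real {v | ∃ j, v j ∈ s} ≤ Fintype.card ι * ν.real s := by
  have hunion : {v : ι → ℝ | ∃ j, v j ∈ s} = ⋃ j, Function.eval j ⁻¹' s := by
    ext v; simp
  calc _ ≤ ∑ j : ι, (Measure.pi fun _ : ι => ν).real (Function.eval j ⁻¹' s) :=
        hunion ▸ measureReal_iUnion_fintype_le _
    _ = Fintype.card ι * ν.real s := by
        simp [measureReal_def, (measurePreserving_eval (fun _ : ι => ν) _).measure_preimage
          hs.nullMeasurableSet]

theorem measureReal_pi_forall_mem (T : Finset ι) (s : Set ℝ) :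
    (Measure.pi fun _ : ι => ν).real {v | ∀ j ∈ T, v j ∈ s} = ν.real s ^ #T := by
  change (Measure.pi fun _ : ι => ν).real ((T : Set ι).pi fun _ => s) = _
  simp [measureReal_def, Measure.pi_pi_finset]

theorem measureReal_pi_card_le_sum_le (hν : ∀ᵐ x ∂ν, x ∈ ({0, 1, 2} : Set ℝ))
    (S : Finset ι) {k : ℕ} (hk : 2 * k ≤ #S + 1) :
    (Measure.pi fun _ : ι => ν).real {v | (#S : ℝ) ≤ ∑ j ∈ S, v j} ≤
      (#S).choose k * ν.real (Set.Ici 1) ^ k := by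
  set D := Measure.pi fun _ : ι => ν
  have hsupp : ∀ᵐ v ∂D, ∀ j, v j ∈ ({0, 1, 2} : Set ℝ) :=
    ae_all_iff.2 fun j => (measurePreserving_eval (fun _ : ι => ν) j).quasiMeasurePreserving.ae hν
  have hcover : {v | (#S : ℝ) ≤ ∑ j ∈ S, v j} ≤ᵐ[D]
      ⋃ T ∈ S.powersetCard k, {v | ∀ j ∈ T, v j ∈ Set.Ici 1} := by
    filter_upwards [hsupp] with v hv hB
    have hcard : #S ≤ 2 * #{j ∈ S | 1 ≤ v j} := by
      exact_mod_cast hB.trans (sum_le_two_mul_card_filter_one_le S fun j _ => hv j)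
    obtain ⟨T, hTS, hTk⟩ := Finset.exists_subset_card_eq (by omega : k ≤ #{j ∈ S | 1 ≤ v j})
    refine Set.mem_iUnion₂.2 ⟨T, Finset.mem_powersetCard.2 ⟨hTS.trans (filter_subset _ _), hTk⟩,
      fun j hj => (Finset.mem_filter.1 (hTS hj)).2⟩
  calc D.real {v | (#S : ℝ) ≤ ∑ j ∈ S, v j}
      ≤ D.real (⋃ T ∈ S.powersetCard k, {v | ∀ j ∈ T, v j ∈ Set.Ici 1}) :=
        ENNReal.toReal_mono (measure_ne_top _ _) (measure_mono_ae hcover)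
    _ ≤ ∑ T ∈ S.powersetCard k, D.real {v | ∀ j ∈ T, v j ∈ Set.Ici 1} :=
        measureReal_biUnion_finset_le _ _
    _ = (#S).choose k * ν.real (Set.Ici 1) ^ k := by
        rw [Finset.sum_congr rfl fun T hT => by
          rw [measureReal_pi_forall_mem, (Finset.mem_powersetCard.1 hT).2]]
        simp

end IidProduct

section ItemDist

variable {m : ℕ} {δ : ℝ}

open Classical in
theorem itemDist_apply {s : Set ℝ} (hs : MeasurableSet s) :
    itemDist m δ s = (if 2 ∈ s then ENNReal.ofReal (δ / m) else 0) +
      (if 1 ∈ s then ENNReal.ofReal δ else 0) +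
      (if 0 ∈ s then ENNReal.ofReal (1 - δ - δ / m) else 0) := by
  simp [itemDist, Measure.dirac_apply' _ hs, Set.indicator_apply]

theorem isProbabilityMeasure_itemDist (hm : 1 ≤ m) (hδ₀ : 0 ≤ δ) (hδ : δ ≤ 1 / 2) :
    IsProbabilityMeasure (itemDist m δ) := by
  have hδm : δ / m ≤ δ := div_le_self hδ₀ (by exact_mod_cast hm)
  constructor
  rw [itemDist_apply MeasurableSet.univ]
  simp only [Set.mem_univ, if_true]
  rw [← ENNReal.ofReal_add (by positivity) hδ₀, ← ENNReal.ofReal_add (by positivity) (by linarith),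
    show δ / m + δ + (1 - δ - δ / m) = 1 by ring, ENNReal.ofReal_one]

theorem ae_itemDist_mem : ∀ᵐ x ∂itemDist m δ, x ∈ ({0, 1, 2} : Set ℝ) := by
  rw [ae_iff, itemDist_apply (by measurability)]
  simp

theorem itemDist_real_Ici_two (hδ₀ : 0 ≤ δ) : (itemDist m δ).real (Set.Ici 2) = δ / m := by
  norm_num [measureReal_def, itemDist_apply measurableSet_Ici, div_nonneg hδ₀ m.cast_nonneg]

theorem itemDist_real_Ici_one (hδ₀ : 0 ≤ δ) :
    (itemDist m δ).real (Set.Ici 1) = δ / m + δ := by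
  norm_num [measureReal_def, itemDist_apply measurableSet_Ici, hδ₀, div_nonneg hδ₀ m.cast_nonneg,
    ENNReal.toReal_add]

end ItemDist

theorem revSel_le_of_price_le_indicator {m : ℕ} {ι : Type*} [Fintype ι]
    {D : Measure (Fin m → ℝ)} [IsFiniteMeasure D] {σ : (Fin m → ℝ) → Entry m} {c : ℝ}
    {A : Set (Fin m → ℝ)} {B : ι → Set (Fin m → ℝ)} (hA : MeasurableSet A)
    (hB : ∀ i, MeasurableSet (B i)) (hσ₀ : ∀ v, 0 ≤ (σ v).2)
    (hσ : ∀ v, (σ v).2 ≤ c * A.indicator 1 v + ∑ i, (B i).indicator 1 v) :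
    revSel D σ ≤ c * D.real A + ∑ i, D.real (B i) := by
  have hint : ∀ C, MeasurableSet C → Integrable (C.indicator (1 : (Fin m → ℝ) → ℝ)) D :=
    fun C hC => (integrable_const 1).indicator hC
  have hsum : Integrable (fun v => ∑ i, (B i).indicator (1 : (Fin m → ℝ) → ℝ) v) D :=
    integrable_finsetSum _ fun i _ => hint _ (hB i)
  calc revSel D σ ≤ ∫ v, c * A.indicator 1 v + ∑ i, (B i).indicator 1 v ∂D :=
        integral_mono_of_nonneg (.of_forall hσ₀) (((hint A hA).const_mul c).add hsum)
          (.of_forall hσ)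
    _ = c * D.real A + ∑ i, D.real (B i) := by
        rw [integral_add ((hint A hA).const_mul c) hsum, integral_const_mul,
          integral_indicator_one hA, integral_finsetSum _ fun i _ => hint _ (hB i)]
        simp only [integral_indicator_one (hB _)]

section Menu

variable {m t : ℕ}

theorem IsSelection.utility_nonneg {M : Finset (Entry m)} {σ : (Fin m → ℝ) → Entry m}
    (hσ : IsSelection M σ) (h0 : (0, 0) ∈ M) (v : Fin m → ℝ) : 0 ≤ utility v (σ v) := by
  simpa [utility] using (hσ v).2 _ h0

theorem utility_single (v : Fin m → ℝ) (j : Fin m) (p : ℝ) :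
    utility v (Pi.single j 1, p) = v j - p := by
  simp [utility, Pi.single_apply]

theorem utility_uniform (v : Fin m → ℝ) (T : Finset (Fin m)) (s : ℕ) (p : ℝ) :
    utility v ((fun j => if j ∈ T then (1 : ℝ) / s else 0), p) = (∑ j ∈ T, v j) / s - p := by
  simp [utility, Finset.sum_mul, div_eq_mul_inv]

noncomputable def overfitMenu (S : Fin t → Finset (Fin m)) (s : ℕ) : Finset (Entry m) :=
  insert (0, 0)
    ((Finset.univ.image fun j : Fin m => (Pi.single j (1 : ℝ), (2 : ℝ))) ∪
      (Finset.univ.image fun i : Fin t =>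
        ((fun j => if j ∈ S i then (1 : ℝ) / s else 0), (1 : ℝ))))

variable {S : Fin t → Finset (Fin m)} {s : ℕ} {e : Entry m}

theorem price_nonneg_of_mem_overfitMenu (he : e ∈ overfitMenu S s) : 0 ≤ e.2 := by
  simp only [overfitMenu, Finset.mem_insert, Finset.mem_union, Finset.mem_image] at he
  rcases he with rfl | ⟨j, -, rfl⟩ | ⟨i, -, rfl⟩ <;> norm_num

theorem price_le_of_mem_overfitMenu (hs : 0 < s) (he : e ∈ overfitMenu S s) {v : Fin m → ℝ}
    (hu : 0 ≤ utility v e) :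
    e.2 ≤ 2 * {v : Fin m → ℝ | ∃ j, 2 ≤ v j}.indicator 1 v +
      ∑ i, {v : Fin m → ℝ | (s : ℝ) ≤ ∑ j ∈ S i, v j}.indicator 1 v := by
  have hA : (0 : ℝ) ≤ {v : Fin m → ℝ | ∃ j, 2 ≤ v j}.indicator 1 v :=
    Set.indicator_nonneg (fun _ _ => zero_le_one) v
  have hB : (0 : ℝ) ≤ ∑ i, {v : Fin m → ℝ | (s : ℝ) ≤ ∑ j ∈ S i, v j}.indicator 1 v :=
    Finset.sum_nonneg fun i _ => Set.indicator_nonneg (fun _ _ => zero_le_one) v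
  simp only [overfitMenu, Finset.mem_insert, Finset.mem_union, Finset.mem_image] at he
  rcases he with rfl | ⟨j, -, rfl⟩ | ⟨i, -, rfl⟩ <;> dsimp only
  · linarith
  · rw [utility_single] at hu
    rw [Set.indicator_of_mem (show v ∈ {v : Fin m → ℝ | ∃ j, 2 ≤ v j} from ⟨j, by linarith⟩),
      Pi.one_apply]
    linarith
  · rw [utility_uniform, sub_nonneg, one_le_div (by exact_mod_cast hs)] at hu
    have hi := Finset.single_le_sum
      (f := fun i => {v : Fin m → ℝ | (s : ℝ) ≤ ∑ j ∈ S i, v j}.indicator (1 : (Fin m → ℝ) → ℝ) v)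
      (fun i _ => Set.indicator_nonneg (fun _ _ => zero_le_one) v) (Finset.mem_univ i)
    rw [Set.indicator_of_mem (show v ∈ {v : Fin m → ℝ | (s : ℝ) ≤ ∑ j ∈ S i, v j} from hu),
      Pi.one_apply] at hi
    linarith

end Menu

/-- **Over-fitting.** The menu consisting of each item priced at `2` together with, for
each of `t` given sets `S_i` of size `s`, the uniform lottery over `S_i` priced at `1`,
extracts at most `2δ + t·(8δ)^(s/2)` revenue from the true product distribution `D_δ`. -/
theorem overfitting_example_lottery_menu :
    ∀ (m : ℕ), 1 ≤ m → ∀ δ : ℝ, 0 < δ → δ ≤ 1 / 2 →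
      ∀ (t s : ℕ), 1 ≤ s → ∀ S : Fin t → Finset (Fin m), (∀ i, (S i).card = s) →
        let M : Finset (Entry m) :=
          insert (0, 0)
            ((Finset.univ.image fun j : Fin m => (Pi.single j (1 : ℝ), (2 : ℝ))) ∪
              (Finset.univ.image fun i : Fin t =>
                ((fun j => if j ∈ S i then (1 : ℝ) / s else 0), (1 : ℝ))))
        ∀ σ : (Fin m → ℝ) → Entry m, IsSelection M σ →
          revSel (Measure.pi fun _ : Fin m => itemDist m δ) σ ≤
            2 * δ + t * (8 * δ) ^ ((s : ℝ) / 2) := by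
  intro m hm δ hδ₀ hδ t s hs S hS M σ hσ
  have := isProbabilityMeasure_itemDist hm hδ₀.le hδ
  set D := Measure.pi fun _ : Fin m => itemDist m δ
  have hA : D.real {v | ∃ j, 2 ≤ v j} ≤ δ := by
    calc _ ≤ m * (itemDist m δ).real (Set.Ici 2) := by
          simpa using
            measureReal_pi_exists_mem_le (ι := Fin m) (ν := itemDist m δ) measurableSet_Ici
      _ = δ := by
          rw [itemDist_real_Ici_two hδ₀.le]
          field_simp
  have hB (i : Fin t) : D.real {v | (s : ℝ) ≤ ∑ j ∈ S i, v j} ≤ (8 * δ) ^ ((s : ℝ) / 2) := by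
    set k := (s + 1) / 2
    calc _ ≤ s.choose k * (itemDist m δ).real (Set.Ici 1) ^ k := by
          simpa [hS i] using
            measureReal_pi_card_le_sum_le ae_itemDist_mem (S i) (by rw [hS i]; omega)
      _ ≤ s.choose k * (2 * δ) ^ k := by
          rw [itemDist_real_Ici_one hδ₀.le]
          gcongr
          linarith [div_le_self hδ₀.le (by exact_mod_cast hm : (1 : ℝ) ≤ m)]
      _ ≤ (4 * (2 * δ)) ^ ((s : ℝ) / 2) :=
          choose_mul_pow_le_rpow (by positivity) (by linarith) (by omega)
      _ = (8 * δ) ^ ((s : ℝ) / 2) := by ring_nf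
  calc revSel D σ ≤ 2 * D.real _ + ∑ i, D.real _ :=
        revSel_le_of_price_le_indicator (by measurability)
          (fun i => measurableSet_le measurable_const
            (Finset.measurable_sum _ fun j _ => measurable_pi_apply j))
          (fun v => price_nonneg_of_mem_overfitMenu (hσ v).1)
          (fun v => price_le_of_mem_overfitMenu hs (hσ v).1
            (hσ.utility_nonneg (Finset.mem_insert_self _ _) v))
    _ ≤ 2 * δ + ∑ _i : Fin t, (8 * δ) ^ ((s : ℝ) / 2) := by gcongr with i; exact hB i
    _ = 2 * δ + t * (8 * δ) ^ ((s : ℝ) / 2) := by simp
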